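/- arXiv:2210.09111 — 12 statements merged into one kernel-verified Lean document; each statement's English description precedes it below -/
import Mathlib

section
/- Let k, l : S → ℂ be a solution of the μ-sine subtraction law (E2) with k ≠ 0. Then k(xy) = −k*(yx), i.e. k(xy) = −μ(yx)·k(σ(yx)), for all x, y ∈ S. -/
/-- Lemma 3.1 (1): For a solution `(k, l)` of the μ-sine subtraction law with `k ≠ 0`,
we have `k(xy) = -k*(yx) = -μ(yx)·k(σ(yx))` for all `x, y ∈ S`. -/
theorem stmt_0 {S : Type*} [Semigroup S]
    (σ : S → S) (hσmul : ∀ x y : S, σ (x * y) = σ x * σ y)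
    (hσinv : ∀ x : S, σ (σ x) = x)
    (μ : S → ℂ) (hμmul : ∀ x y : S, μ (x * y) = μ x * μ y)
    (hμ1 : ∀ x : S, μ (x * σ x) = 1)
    (k l : S → ℂ) (hk : k ≠ 0)
    (hE2 : ∀ x y : S, μ y * k (x * σ y) = k x * l y - k y * l x) :
    ∀ x y : S, k (x * y) = -(μ (y * x) * k (σ (y * x))) := by
  intro x y
  have h1 := hE2 x (σ y)
  rw [hσinv] at h1
  have h2 := hE2 (σ y) x
  have hμy : μ y * μ (σ y) = 1 := by rw [← hμmul]; exact hμ1 y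
  rw [hμmul, hσmul]
  linear_combination μ y * h1 + μ y * h2 - k (x * y) * hμy
end

section
/- Let k, l : S → ℂ be a solution of the μ-sine subtraction law (E2) with k ≠ 0. If k = k* (i.e. k(x) = μ(x)k(σ(x)) for all x ∈ S), then k(xyz) = 0 for all x, y, z ∈ S. -/
/-- Lemma 3.1 (2): For a solution `(k, l)` of the μ-sine subtraction law with `k ≠ 0`,
if `k = k*` then `k(xyz) = 0` for all `x, y, z ∈ S`. -/
theorem stmt_1 {S : Type*} [Semigroup S]
    (σ : S → S) (hσmul : ∀ x y : S, σ (x * y) = σ x * σ y)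
    (hσinv : ∀ x : S, σ (σ x) = x)
    (μ : S → ℂ) (hμmul : ∀ x y : S, μ (x * y) = μ x * μ y)
    (hμ1 : ∀ x : S, μ (x * σ x) = 1)
    (k l : S → ℂ) (hk : k ≠ 0)
    (hE2 : ∀ x y : S, μ y * k (x * σ y) = k x * l y - k y * l x)
    (hkstar : ∀ x : S, k x = μ x * k (σ x)) :
    ∀ x y z : S, k (x * y * z) = 0 := by
  have hμne : ∀ y : S, μ y ≠ 0 := by
    intro y h
    have := hμ1 y
    rw [hμmul, h, zero_mul] at this
    exact zero_ne_one this
  -- anti-symmetry: k(ab) = -k(ba)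
  have hanti : ∀ a b : S, k (a * b) = - k (b * a) := by
    have key : ∀ x y : S, k (σ y * x) = - k (x * σ y) := by
      intro x y
      have h1 := hE2 x y
      have h2 := hE2 y x
      have h3 : k (y * σ x) = μ (y * σ x) * k (σ y * x) := by
        rw [hkstar (y * σ x), hσmul, hσinv]
      have h4 : μ x * (μ y * μ (σ x)) * k (σ y * x) = - (μ y * k (x * σ y)) := by
        rw [h1]
        have := h2
        rw [h3, hμmul] at this
        linear_combination this
      have h5 : μ x * μ (σ x) = 1 := by rw [← hμmul]; exact hμ1 x
      have h6 : μ y * k (σ y * x) = - (μ y * k (x * σ y)) := by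
        calc μ y * k (σ y * x) = μ x * (μ y * μ (σ x)) * k (σ y * x) := by
              linear_combination (μ y * k (σ y * x)) * h5.symm
          _ = - (μ y * k (x * σ y)) := h4
      have := mul_left_cancel₀ (hμne y) (by rw [h6]; ring : μ y * k (σ y * x) = μ y * (- k (x * σ y)))
      exact this
    intro a b
    have := key b (σ a)
    rwa [hσinv] at this
  intro x y z
  have h1 : k (x * y * z) = - k (z * (x * y)) := hanti _ _
  have h2 : k (z * x * y) = - k (y * (z * x)) := hanti _ _
  have h3 : k (y * z * x) = - k (x * (y * z)) := hanti _ _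
  rw [mul_assoc] at h1 h2 h3
  rw [mul_assoc]
  linear_combination (h1 - h2 + h3) / 2
end

section
/- Let k, l : S → ℂ be a solution of the μ-sine subtraction law (E2) with k ≠ 0. If k vanishes on S², i.e. k(xy) = 0 for all x, y ∈ S, then there exists a constant c ∈ ℂ such that l = c·k. -/
/-- If `(k, l)` solves the μ-sine subtraction law with `k ≠ 0` and `k` vanishes on `S²`,
then `l = c·k` for some constant `c ∈ ℂ`. -/
theorem stmt_3 {S : Type*} [Semigroup S]
    (σ : S → S) (hσmul : ∀ x y : S, σ (x * y) = σ x * σ y)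
    (hσinv : ∀ x : S, σ (σ x) = x)
    (μ : S → ℂ) (hμmul : ∀ x y : S, μ (x * y) = μ x * μ y)
    (hμ1 : ∀ x : S, μ (x * σ x) = 1)
    (k l : S → ℂ) (hk : k ≠ 0)
    (hE2 : ∀ x y : S, μ y * k (x * σ y) = k x * l y - k y * l x)
    (hvan : ∀ x y : S, k (x * y) = 0) :
    ∃ c : ℂ, ∀ x : S, l x = c * k x := by
  obtain ⟨x₀, hx₀⟩ : ∃ x, k x ≠ 0 := by
    by_contra h
    push_neg at h
    exact hk (funext h)
  refine ⟨l x₀ / k x₀, fun x => ?_⟩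
  have h := hE2 x₀ x
  rw [hvan] at h
  have hsym : k x₀ * l x = k x * l x₀ := by linear_combination -h
  field_simp
  linear_combination hsym
end

section
/- Let k, l : S → ℂ be a solution of the μ-sine subtraction law (E2). Then k(xy) = k(x)l*(y) − k*(y)l(x) for all x, y ∈ S, where f*(x) := μ(x)f(σ(x)). -/
/-- If `(k, l)` solves the μ-sine subtraction law, then
`k(xy) = k(x)l*(y) − k*(y)l(x)` for all `x, y ∈ S`, where `f*(x) = μ(x)f(σ(x))`. -/
theorem stmt_4 {S : Type*} [Semigroup S]
    (σ : S → S) (hσmul : ∀ x y : S, σ (x * y) = σ x * σ y)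
    (hσinv : ∀ x : S, σ (σ x) = x)
    (μ : S → ℂ) (hμmul : ∀ x y : S, μ (x * y) = μ x * μ y)
    (hμ1 : ∀ x : S, μ (x * σ x) = 1)
    (k l : S → ℂ)
    (hE2 : ∀ x y : S, μ y * k (x * σ y) = k x * l y - k y * l x) :
    ∀ x y : S, k (x * y) = k x * (μ y * l (σ y)) - (μ y * k (σ y)) * l x := by
  intro x y
  have h := hE2 x (σ y)
  rw [hσinv] at h
  have h1 : μ y * μ (σ y) = 1 := by rw [← hμmul, hμ1]
  calc k (x * y) = μ y * μ (σ y) * k (x * y) := by rw [h1, one_mul]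
    _ = μ y * (μ (σ y) * k (x * y)) := by ring
    _ = μ y * (k x * l (σ y) - k (σ y) * l x) := by rw [h]
    _ = k x * (μ y * l (σ y)) - (μ y * k (σ y)) * l x := by ring
end

section
/- Let k, l : S → ℂ be a solution of the μ-sine subtraction law (E2) such that k and l are linearly independent over ℂ. Then there exist functions φ, ψ : S → ℂ such that l(xσ(y)) = k(x)φ(y) + l(x)ψ(y) for all x, y ∈ S. -/
/-!
Fix `z` with `k z ≠ 0`. Writing `k (x σ(y) σ(z))`
via (E2) once at `(x, yz)` and once at `(xσ(y), z)`, then expanding `k (x σ(y))` by (E2) at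
`(x, y)`, leaves `μ(y) k(z) l(xσ(y))` as a combination of `k x` and `l x` with coefficients
depending on `y` only; dividing by `μ(y) k(z) ≠ 0` gives `φ` and `ψ`.
-/

section SineSubtraction

variable {S : Type*} [Semigroup S] {σ : S → S} {μ : S → ℂ} {k l : S → ℂ}

lemma ne_zero_of_mul_involution_eq_one (hμmul : ∀ x y : S, μ (x * y) = μ x * μ y)
    (hμ1 : ∀ x : S, μ (x * σ x) = 1) (y : S) : μ y ≠ 0 :=
  left_ne_zero_of_mul_eq_one (by rw [← hμmul, hμ1])

lemma sineSubtraction_mul_l_eq (hσmul : ∀ x y : S, σ (x * y) = σ x * σ y)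
    (hμmul : ∀ x y : S, μ (x * y) = μ x * μ y)
    (hE2 : ∀ x y : S, μ y * k (x * σ y) = k x * l y - k y * l x) (x y z : S) :
    μ y * k z * l (x * σ y)
      = k x * (l y * l z - l (y * z)) + l x * (k (y * z) - k y * l z) := by
  have h_yz := hE2 x (y * z)
  have h_z := hE2 (x * σ y) z
  rw [hμmul] at h_yz
  rw [mul_assoc, ← hσmul] at h_z
  linear_combination l z * hE2 x y + μ y * h_z - h_yz

lemma sineSubtraction_l_mul_eq (hσmul : ∀ x y : S, σ (x * y) = σ x * σ y)
    (hμmul : ∀ x y : S, μ (x * y) = μ x * μ y) (hμ1 : ∀ x : S, μ (x * σ x) = 1)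
    (hE2 : ∀ x y : S, μ y * k (x * σ y) = k x * l y - k y * l x) {z : S} (hz : k z ≠ 0)
    (x y : S) :
    l (x * σ y) = k x * ((l y * l z - l (y * z)) / (μ y * k z))
      + l x * ((k (y * z) - k y * l z) / (μ y * k z)) := by
  have hne : μ y * k z ≠ 0 := mul_ne_zero (ne_zero_of_mul_involution_eq_one hμmul hμ1 y) hz
  rw [mul_div_assoc', mul_div_assoc', ← add_div, eq_div_iff hne]
  linear_combination sineSubtraction_mul_l_eq hσmul hμmul hE2 x y z

end SineSubtraction

theorem stmt_5_general {S : Type*} [Semigroup S]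
    (σ : S → S) (hσmul : ∀ x y : S, σ (x * y) = σ x * σ y)
    (μ : S → ℂ) (hμmul : ∀ x y : S, μ (x * y) = μ x * μ y)
    (hμ1 : ∀ x : S, μ (x * σ x) = 1)
    (k l : S → ℂ) (hind : LinearIndependent ℂ ![k, l])
    (hE2 : ∀ x y : S, μ y * k (x * σ y) = k x * l y - k y * l x) :
    ∃ φ ψ : S → ℂ, ∀ x y : S, l (x * σ y) = k x * φ y + l x * ψ y := by
  obtain ⟨z, hz⟩ : ∃ z, k z ≠ 0 := Function.ne_iff.mp (by simpa using hind.ne_zero 0 : k ≠ 0)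
  exact ⟨_, _, sineSubtraction_l_mul_eq hσmul hμmul hμ1 hE2 hz⟩

/-- If `(k, l)` solves the μ-sine subtraction law and `k, l` are linearly independent over ℂ,
then there are functions `φ, ψ : S → ℂ` with `l(xσ(y)) = k(x)φ(y) + l(x)ψ(y)`. -/
theorem stmt_5 {S : Type*} [Semigroup S]
    (σ : S → S) (hσmul : ∀ x y : S, σ (x * y) = σ x * σ y)
    (hσinv : ∀ x : S, σ (σ x) = x)
    (μ : S → ℂ) (hμmul : ∀ x y : S, μ (x * y) = μ x * μ y)
    (hμ1 : ∀ x : S, μ (x * σ x) = 1)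
    (k l : S → ℂ) (hind : LinearIndependent ℂ ![k, l])
    (hE2 : ∀ x y : S, μ y * k (x * σ y) = k x * l y - k y * l x) :
    ∃ φ ψ : S → ℂ, ∀ x y : S, l (x * σ y) = k x * φ y + l x * ψ y :=
  stmt_5_general σ hσmul μ hμmul hμ1 k l hind hE2
end

section
/- Let k, l : S → ℂ be a solution of the μ-sine subtraction law (E2) such that k and l are linearly independent over ℂ. Then k is odd with respect to μ and σ, i.e. k* = −k, where k*(x) := μ(x)k(σ(x)). -/
/-- If `(k, l)` solves the μ-sine subtraction law and `k, l` are linearly independent over ℂ,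
then `k* = −k`, i.e. `μ(x)k(σ(x)) = −k(x)` for all `x ∈ S`. -/
theorem stmt_6 {S : Type*} [Semigroup S]
    (σ : S → S) (hσmul : ∀ x y : S, σ (x * y) = σ x * σ y)
    (hσinv : ∀ x : S, σ (σ x) = x)
    (μ : S → ℂ) (hμmul : ∀ x y : S, μ (x * y) = μ x * μ y)
    (hμ1 : ∀ x : S, μ (x * σ x) = 1)
    (k l : S → ℂ) (hind : LinearIndependent ℂ ![k, l])
    (hE2 : ∀ x y : S, μ y * k (x * σ y) = k x * l y - k y * l x) :
    ∀ x : S, μ x * k (σ x) = -k x := by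
  -- basic facts about μ
  have hμσ : ∀ x : S, μ x * μ (σ x) = 1 := fun x => by rw [← hμmul]; exact hμ1 x
  -- linear independence in pointwise form
  have hli : ∀ a b : ℂ, (∀ t : S, a * k t + b * l t = 0) → a = 0 ∧ b = 0 := by
    intro a b h
    refine LinearIndependent.pair_iff.mp hind a b ?_
    funext t
    simpa using h t
  -- k ≠ 0 somewhere
  obtain ⟨y₀, hk0⟩ : ∃ y₀ : S, k y₀ ≠ 0 := by
    by_contra h
    push_neg at h
    exact one_ne_zero (hli 1 0 (fun t => by simp [h t])).1
  -- (A): addition-type formula for k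
  have hA : ∀ x y : S, k (x * y) = (μ y * l (σ y)) * k x - (μ y * k (σ y)) * l x := by
    intro x y
    have h1 := hE2 x (σ y)
    rw [hσinv] at h1
    linear_combination μ y * h1 - k (x * y) * hμσ y
  -- (VI)
  have hVI : ∀ x y z : S, k y * (μ z * l (x * σ z)) =
      k x * (l z * l y - l (z * y)) + l x * (k (z * y) - k z * l y) := by
    intro x y z
    have h1 := hE2 (x * σ z) y
    have harg : x * σ z * σ y = x * σ (z * y) := by rw [hσmul, mul_assoc]
    rw [harg] at h1
    have h2 := hE2 x (z * y)
    rw [hμmul] at h2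
    have h3 := hE2 x z
    linear_combination μ z * h1 - h2 + l y * h3
  -- (VIa) and (VIb)
  have key : ∀ y y' z : S,
      (k y' * (l z * l y - l (z * y)) - k y * (l z * l y' - l (z * y')) = 0) ∧
      (k y' * (k (z * y) - k z * l y) - k y * (k (z * y') - k z * l y') = 0) := by
    intro y y' z
    refine hli _ _ (fun x => ?_)
    have h1 := hVI x y z
    have h2 := hVI x y' z
    linear_combination k y * h2 - k y' * h1
  -- (α) and (β)
  have key2 : ∀ y y' : S,
      (k y' * (μ y * l (σ y) - l y) - k y * (μ y' * l (σ y') - l y') = 0) ∧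
      (-(k y' * (μ y * k (σ y)) - k y * (μ y' * k (σ y'))) = 0) := by
    intro y y'
    refine hli _ _ (fun z => ?_)
    have h := (key y y' z).2
    have ha1 := hA z y
    have ha2 := hA z y'
    linear_combination h - k y' * ha1 + k y * ha2
  -- k* is proportional to k
  have hks : ∀ y : S, k y₀ * (μ y * k (σ y)) = k y * (μ y₀ * k (σ y₀)) := by
    intro y
    have h := (key2 y y₀).2
    linear_combination -h
  obtain ⟨c, hkc⟩ : ∃ c : ℂ, ∀ y : S, μ y * k (σ y) = c * k y := by
    refine ⟨(μ y₀ * k (σ y₀)) / k y₀, fun y => ?_⟩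
    field_simp
    linear_combination hks y
  -- c² = 1
  have hcc : c * c = 1 := by
    have h1 := hkc (σ y₀)
    rw [hσinv] at h1
    have h2 := hkc y₀
    have h3 : k y₀ * (c * c - 1) = 0 := by
      linear_combination -(c * h2 + μ y₀ * h1) + k y₀ * hμσ y₀
    rcases mul_eq_zero.mp h3 with h | h
    · exact absurd h hk0
    · linear_combination h
  rcases mul_self_eq_one_iff.mp hcc with hc1 | hc1
  · -- c = 1 : contradiction with linear independence
    exfalso
    have hks1 : ∀ y : S, μ y * k (σ y) = k y := by
      intro y; rw [hkc y, hc1, one_mul]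
    -- second addition formula for k
    have hb : ∀ x y : S, k (x * y) = l y * k x - k y * (μ x * l (σ x)) := by
      intro x y
      have h := hE2 (σ x) y
      have e1 := hks1 x
      have e2 := hks1 (x * y)
      rw [hμmul, hσmul] at e2
      linear_combination μ x * h - e2 + l y * e1
    -- first addition formula with k* = k
    have ha' : ∀ x y : S, k (x * y) = (μ y * l (σ y)) * k x - k y * l x := by
      intro x y
      have h := hA x y
      rw [hks1 y] at h
      exact h
    -- l* = l
    have hd : ∀ x y : S,
        (μ y * l (σ y) - l y) * k x + k y * (μ x * l (σ x) - l x) = 0 := by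
      intro x y
      linear_combination hb x y - ha' x y
    have hdy0 : μ y₀ * l (σ y₀) - l y₀ = 0 := by
      have h2 : k y₀ * ((μ y₀ * l (σ y₀) - l y₀) * 2) = 0 := by
        linear_combination hd y₀ y₀
      rcases mul_eq_zero.mp h2 with h | h
      · exact absurd h hk0
      · rcases mul_eq_zero.mp h with h' | h'
        · exact h'
        · norm_num at h'
    have hls : ∀ y : S, μ y * l (σ y) = l y := by
      intro y
      have h2 : (μ y * l (σ y) - l y) * k y₀ = 0 := by
        linear_combination hd y₀ y - k y * hdy0
      rcases mul_eq_zero.mp h2 with h | h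
      · linear_combination h
      · exact absurd h hk0
    -- cosine-type formula (VII)
    have hVII : ∀ z y : S, k y₀ * l (z * y) =
        k y₀ * (l z * l y) - (l z * l y₀ - l (z * y₀)) * k y := by
      intro z y
      have h := (key y y₀ z).1
      linear_combination -h
    -- (VIII)
    have hVIII : ∀ x z : S, k y₀ * (μ z * l (x * σ z)) =
        k x * (l z * l y₀ - l (z * y₀)) - k y₀ * (l x * l z) := by
      intro x z
      have h := hVI x y₀ z
      have h2 := ha' z y₀
      rw [hls y₀] at h2
      linear_combination h + l x * h2
    -- second cosine-type formula from (VIII)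
    have w1 : ∀ x z : S, k y₀ * l (x * z) =
        k x * (μ z * (l (σ z) * l y₀ - l (σ z * y₀))) - k y₀ * (l x * l z) := by
      intro x z
      have h := hVIII x (σ z)
      rw [hσinv] at h
      linear_combination μ z * h - (k y₀ * l (x * z)) * hμσ z - (k y₀ * l x) * hls z
    -- (IX)
    have hIX0 : ∀ x z : S,
        k x * (μ z * (l (σ z) * l y₀ - l (σ z * y₀)))
          + k z * (l x * l y₀ - l (x * y₀)) - 2 * (k y₀ * (l x * l z)) = 0 := by
      intro x z
      linear_combination hVII x z - w1 x z
    -- conclude proportionality of k and l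
    have final : ∀ z : S, l y₀ * k z - k y₀ * l z = 0 := by
      intro z
      have h := hli
        (2 * (k y₀ * (l y₀ * l z))
          - (l y₀ * l y₀ - l (y₀ * y₀)) * k z
          - (μ y₀ * (l (σ y₀) * l y₀ - l (σ y₀ * y₀))) * k z)
        (2 * k y₀ * (l y₀ * k z - k y₀ * l z))
        (fun x => by
          linear_combination k y₀ * hIX0 x z - k x * hIX0 y₀ z - k z * hIX0 x y₀)
      have h2 := h.2
      have h2ne : (2 : ℂ) * k y₀ ≠ 0 := mul_ne_zero two_ne_zero hk0
      have h3 : (2 * k y₀) * (l y₀ * k z - k y₀ * l z) = 0 := by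
        linear_combination h2
      rcases mul_eq_zero.mp h3 with h4 | h4
      · exact absurd h4 h2ne
      · exact h4
    have := (hli (l y₀) (-(k y₀)) (fun z => by linear_combination final z)).2
    rw [neg_eq_zero] at this
    exact hk0 this
  · -- c = -1 : done
    intro x
    rw [hkc x, hc1]
    ring
end

section
/- Let k, l : S → ℂ be a solution of the μ-sine subtraction law (E2) such that k and l are linearly independent over ℂ. Then there exists a constant c ∈ ℂ such that l° = c·k, and the pair (k, l^e) satisfies the sine addition law: k(xy) = k(x)l^e(y) + k(y)l^e(x) for all x, y ∈ S. Here f*(x) := μ(x)f(σ(x)), f^e := (f + f*)/2 and f° := (f − f*)/2. -/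
/-- If `(k, l)` solves the μ-sine subtraction law and `k, l` are linearly independent over ℂ,
then `l° = c·k` for some constant `c`, and `(k, lᵉ)` satisfies the sine addition law. -/
theorem stmt_7 {S : Type*} [Semigroup S]
    (σ : S → S) (hσmul : ∀ x y : S, σ (x * y) = σ x * σ y)
    (hσinv : ∀ x : S, σ (σ x) = x)
    (μ : S → ℂ) (hμmul : ∀ x y : S, μ (x * y) = μ x * μ y)
    (hμ1 : ∀ x : S, μ (x * σ x) = 1)
    (k l : S → ℂ) (hind : LinearIndependent ℂ ![k, l])
    (hE2 : ∀ x y : S, μ y * k (x * σ y) = k x * l y - k y * l x) :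
    (∃ c : ℂ, ∀ x : S, (l x - μ x * l (σ x)) / 2 = c * k x) ∧
      (∀ x y : S, k (x * y) =
        k x * ((l y + μ y * l (σ y)) / 2) + k y * ((l x + μ x * l (σ x)) / 2)) := by
  have hμ0 : ∀ x : S, μ x * μ (σ x) = 1 := fun x => by rw [← hμmul]; exact hμ1 x
  have hpair : ∀ s t : ℂ, (∀ x, s * k x + t * l x = 0) → s = 0 ∧ t = 0 := by
    intro s t h
    exact LinearIndependent.pair_iff.mp hind s t (funext fun x => by simpa using h x)
  -- basic product formula
  have hA : ∀ x y : S, k (x * y) = k x * (μ y * l (σ y)) - (μ y * k (σ y)) * l x := by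
    intro x y
    have h := hE2 x (σ y)
    rw [hσinv] at h
    linear_combination μ y * h - k (x * y) * hμ0 y
  have hk0 : ∃ y₀, k y₀ ≠ 0 := by
    by_contra h
    push_neg at h
    have := (hpair 1 0 (fun x => by simp [h x])).1
    exact one_ne_zero this
  obtain ⟨y₀, hy₀⟩ := hk0
  have hF : ∀ x y z : S, μ z * (k y * l (x * σ z)) =
      k x * (l z * l y - l (z * y)) + l x * (k (z * y) - k z * l y) := by
    intro x y z
    have h1 := hE2 (x * σ z) y
    rw [mul_assoc, ← hσmul] at h1
    have h2 := hE2 x (z * y)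
    rw [hμmul] at h2
    have h3 := hE2 x z
    linear_combination μ z * h1 - h2 + l y * h3
  obtain ⟨A, hAe⟩ : ∃ A : S → ℂ, ∀ z, A z = l z * l y₀ - l (z * y₀) := ⟨_, fun z => rfl⟩
  obtain ⟨B, hBe⟩ : ∃ B : S → ℂ, ∀ z, B z = k (z * y₀) - k z * l y₀ := ⟨_, fun z => rfl⟩
  have hL12 : ∀ z y : S, k y * A z = k y₀ * (l z * l y - l (z * y)) ∧
      k y * B z = k y₀ * (k (z * y) - k z * l y) := by
    intro z y
    have h : ∀ x, (k y * A z - k y₀ * (l z * l y - l (z * y))) * k x +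
        (k y * B z - k y₀ * (k (z * y) - k z * l y)) * l x = 0 := by
      intro x
      linear_combination k y₀ * hF x y z - k y * hF x y₀ z + k y * k x * hAe z +
        k y * l x * hBe z
    obtain ⟨h1, h2⟩ := hpair _ _ h
    exact ⟨sub_eq_zero.mp h1, sub_eq_zero.mp h2⟩
  have hL1 : ∀ x z : S, k y₀ * l (x * z) = k y₀ * (l x * l z) - A x * k z := by
    intro x z
    linear_combination (hL12 x z).1
  have hL2 : ∀ x z : S, k y₀ * k (x * z) = k y₀ * (k x * l z) + B x * k z := by
    intro x z
    linear_combination -(hL12 x z).2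
  have hKey : ∀ y z : S, k y₀ * (k z * (l y - μ y * l (σ y)) + (μ y * k (σ y)) * l z) +
      k y * B z = 0 := by
    intro y z
    linear_combination k y₀ * hA z y - hL2 z y
  have helim : ∀ y y' : S,
      k y' * (l y - μ y * l (σ y)) = k y * (l y' - μ y' * l (σ y')) ∧
      k y' * (μ y * k (σ y)) = k y * (μ y' * k (σ y')) := by
    intro y y'
    have h : ∀ z, (k y₀ * (k y' * (l y - μ y * l (σ y)) - k y * (l y' - μ y' * l (σ y')))) * k z
        + (k y₀ * (k y' * (μ y * k (σ y)) - k y * (μ y' * k (σ y')))) * l z = 0 := by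
      intro z
      linear_combination k y' * hKey y z - k y * hKey y' z
    obtain ⟨h1, h2⟩ := hpair _ _ h
    constructor
    · rcases mul_eq_zero.mp h1 with h | h
      · exact absurd h hy₀
      · exact sub_eq_zero.mp h
    · rcases mul_eq_zero.mp h2 with h | h
      · exact absurd h hy₀
      · exact sub_eq_zero.mp h
  have hLk : ∀ y, k y₀ * (l y - μ y * l (σ y)) = k y * (l y₀ - μ y₀ * l (σ y₀)) :=
    fun y => (helim y y₀).1
  have hKk : ∀ y, k y₀ * (μ y * k (σ y)) = k y * (μ y₀ * k (σ y₀)) :=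
    fun y => (helim y y₀).2
  set c : ℂ := (l y₀ - μ y₀ * l (σ y₀)) / (2 * k y₀) with hc
  set d : ℂ := (μ y₀ * k (σ y₀)) / k y₀ with hd
  have hcy : 2 * c * k y₀ = l y₀ - μ y₀ * l (σ y₀) := by
    rw [hc]; field_simp
  have hLc : ∀ y, l y - μ y * l (σ y) = 2 * c * k y := by
    intro y
    refine mul_left_cancel₀ hy₀ ?_
    linear_combination hLk y - k y * hcy
  have hdy : d * k y₀ = μ y₀ * k (σ y₀) := by
    rw [hd]; field_simp
  have hKd : ∀ y, μ y * k (σ y) = d * k y := by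
    intro y
    refine mul_left_cancel₀ hy₀ ?_
    linear_combination hKk y - k y * hdy
  have hB : ∀ z, B z = -(k y₀ * (2 * c * k z + d * l z)) := by
    intro z
    have h : k y₀ * (B z + k y₀ * (2 * c * k z + d * l z)) = 0 := by
      linear_combination hKey y₀ z - (k y₀ * k z) * hLc y₀ - (k y₀ * l z) * hKd y₀
    rcases mul_eq_zero.mp h with h | h
    · exact absurd h hy₀
    · linear_combination h
  have hD : ∀ a b : S, d * k (a * b) = -k (b * a) := by
    intro a b
    have e1 := hA (σ a) (σ b)
    rw [hσinv] at e1
    have e2 := hA b a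
    have e3 := hKd (a * b)
    rw [hμmul, hσmul] at e3
    linear_combination -e3 + μ a * μ b * e1 + e2 +
      (μ a * k (σ a) * l b - μ a * k b * l (σ a)) * hμ0 b
  have h9 : ∀ z, -(2 * c * (d + 1)) * k z + (1 - d ^ 2) * l z = 0 := by
    intro z
    have h : k y₀ * (k y₀ * (-(2 * c * (d + 1)) * k z + (1 - d ^ 2) * l z)) = 0 := by
      linear_combination k y₀ * hD z y₀ + (d * k y₀) * hBe z - hL2 y₀ z -
        (d * k y₀) * hB z - k z * hB y₀
    rcases mul_eq_zero.mp h with h | h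
    · exact absurd h hy₀
    rcases mul_eq_zero.mp h with h | h
    · exact absurd h hy₀
    exact h
  obtain ⟨hc0, hd0⟩ := hpair _ _ h9
  have hd2 : d = 1 ∨ d = -1 := by
    have h : (d - 1) * (d + 1) = 0 := by linear_combination -hd0
    rcases mul_eq_zero.mp h with h | h
    · exact Or.inl (sub_eq_zero.mp h)
    · exact Or.inr (eq_neg_of_add_eq_zero_left h)
  rcases hd2 with hd1 | hd1
  · -- case d = 1 : contradiction with linear independence
    exfalso
    have h4 : ∀ x z : S, k x * A z + A x * k z = 2 * k y₀ * (l x * l z) := by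
      intro x z
      have e1 := hF x y₀ z
      have e2 := hL1 x (σ z)
      linear_combination -e1 + k x * hAe z + l x * hBe z + μ z * e2 -
        (k y₀ * l x) * hLc z - A x * hKd z - l x * hB z +
        (k y₀ * l x * l z - A x * k z) * hd1
    have h5 : ∀ z, (2 * k y₀ * l y₀) * k z + (-(2 * (k y₀) ^ 2)) * l z = 0 := by
      intro z
      have h6 : ∀ x, (k y₀ * A z - A y₀ * k z) * k x +
          (2 * k y₀ * l y₀ * k z - 2 * (k y₀) ^ 2 * l z) * l x = 0 := by
        intro x
        linear_combination k y₀ * h4 x z - k z * h4 x y₀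
      have h7 := (hpair _ _ h6).2
      linear_combination h7
    have h8 := (hpair _ _ h5).2
    have hsq : k y₀ ^ 2 = 0 := by linear_combination (-(1 : ℂ) / 2) * h8
    exact hy₀ (sq_eq_zero_iff.mp hsq)
  · -- case d = -1 : conclude
    constructor
    · exact ⟨c, fun x => by linear_combination (1 / 2 : ℂ) * hLc x⟩
    · intro x y
      linear_combination hA x y - (k x / 2) * hLc y + (k y / 2) * hLc x -
        l x * hKd y - k y * l x * hd1
end

section
/- Let χ : S → ℂ be a multiplicative function with χ* ≠ χ (where χ*(x) := μ(x)χ(σ(x))), and let c₁ ∈ ℂ \ {0} and c₂ ∈ ℂ be constants. Then the pair k := c₁(χ − χ*)/2 and l := (χ + χ*)/2 + c₂(χ − χ*)/2 satisfies the μ-sine subtraction law (E2): μ(y)k(xσ(y)) = k(x)l(y) − k(y)l(x) for all x, y ∈ S. -/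
/-- Converse, case (2) of Proposition 3.2: for a multiplicative `χ` with `χ* ≠ χ`,
`k = c₁(χ − χ*)/2` and `l = (χ + χ*)/2 + c₂(χ − χ*)/2` satisfy the μ-sine subtraction law. -/
theorem stmt_8 {S : Type*} [Semigroup S]
    (σ : S → S) (hσmul : ∀ x y : S, σ (x * y) = σ x * σ y)
    (hσinv : ∀ x : S, σ (σ x) = x)
    (μ : S → ℂ) (hμmul : ∀ x y : S, μ (x * y) = μ x * μ y)
    (hμ1 : ∀ x : S, μ (x * σ x) = 1)
    (χ : S → ℂ) (hχmul : ∀ x y : S, χ (x * y) = χ x * χ y)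
    (hχne : (fun x => μ x * χ (σ x)) ≠ χ)
    (c₁ c₂ : ℂ) (hc₁ : c₁ ≠ 0)
    (k l : S → ℂ)
    (hk : ∀ x : S, k x = c₁ * (χ x - μ x * χ (σ x)) / 2)
    (hl : ∀ x : S, l x = (χ x + μ x * χ (σ x)) / 2 + c₂ * (χ x - μ x * χ (σ x)) / 2) :
    ∀ x y : S, μ y * k (x * σ y) = k x * l y - k y * l x := by
  intro x y
  have h1 : μ y * μ (σ y) = 1 := by rw [← hμmul]; exact hμ1 y
  simp only [hk, hl, hχmul, hμmul, hσmul, hσinv]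
  linear_combination (-(c₁ * μ x * χ (σ x) * χ y) / 2) * h1
end

section
/- Suppose S² = S, i.e. every element of S is a product of two elements of S. Let g, h, l : S → ℂ be functions satisfying h(xy) = g*(x)l(y) − g(y)l*(x) for all x, y ∈ S, where f*(x) := μ(x)f(σ(x)). Then h is odd with respect to μ and σ, i.e. h* = −h. -/
/-- If `S² = S` and `h(xy) = g*(x)l(y) − g(y)l*(x)` for all `x, y ∈ S`,
then `h` is odd: `h* = −h`. -/
theorem stmt_12 {S : Type*} [Semigroup S]
    (σ : S → S) (hσmul : ∀ x y : S, σ (x * y) = σ x * σ y)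
    (hσinv : ∀ x : S, σ (σ x) = x)
    (μ : S → ℂ) (hμmul : ∀ x y : S, μ (x * y) = μ x * μ y)
    (hμ1 : ∀ x : S, μ (x * σ x) = 1)
    (hS2 : ∀ x : S, ∃ a b : S, x = a * b)
    (g h l : S → ℂ)
    (heq : ∀ x y : S, h (x * y) = (μ x * g (σ x)) * l y - g y * (μ x * l (σ x))) :
    ∀ x : S, μ x * h (σ x) = -h x := by
  have hμσ : ∀ x : S, μ x * μ (σ x) = 1 := fun x => by
    rw [← hμmul]; exact hμ1 x
  set k : S → ℂ := fun x => h x + μ x * h (σ x) with hk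
  have hswap : ∀ x y : S, μ (x * y) * h (σ (x * y)) = -h (y * x) := by
    intro x y
    rw [hσmul, heq, heq, hμmul, hσinv x]
    linear_combination (μ y * g x * l (σ y) - μ y * g (σ y) * l x) * hμσ x
  have kanti : ∀ x y : S, k (x * y) = -k (y * x) := by
    intro x y
    simp only [hk]
    rw [hswap x y, hswap y x]
    ring
  have ctriple : ∀ a b c : S, k (a * b * c) = -k (c * a * b) := by
    intro a b c
    have := kanti (a * b) c
    rwa [← mul_assoc] at this
  have h3 : ∀ x y z : S, k (x * y * z) = 0 := by
    intro x y z
    have h1 := ctriple x y z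
    have h2 := ctriple z x y
    have h4 := ctriple y z x
    linear_combination (h1 - h2 + h4) / 2
  intro x
  obtain ⟨a, b, rfl⟩ := hS2 x
  obtain ⟨c, d, rfl⟩ := hS2 a
  have hz := h3 c d b
  simp only [hk] at hz
  linear_combination hz
end

section
/- Let θ ∈ N_μ(σ,S), let χ : S → ℂ be a multiplicative function with χ ≠ χ* (where χ*(x) := μ(x)χ(σ(x))), and let α, β ∈ ℂ with (α, β) ≠ (0, 0). Define f := θ + α(χ + χ*)/2 + β(χ − χ*)/2, g := β(χ + χ*) + α(χ − χ*), and h := (χ − χ*)/2. Then (f, g, h) satisfies equation (E1): f(xy) − μ(y)f(σ(y)x) = g(x)h(y) for all x, y ∈ S. -/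
/-- Converse, case (3) of Theorem 3.4: with `θ ∈ N_μ(σ,S)`, `χ` multiplicative with `χ ≠ χ*`,
and `(α, β) ≠ (0, 0)`, the triple `f = θ + α(χ+χ*)/2 + β(χ−χ*)/2`, `g = β(χ+χ*) + α(χ−χ*)`,
`h = (χ−χ*)/2` satisfies `f(xy) − μ(y)f(σ(y)x) = g(x)h(y)`. -/
theorem stmt_13 {S : Type*} [Semigroup S]
    (σ : S → S) (hσmul : ∀ x y : S, σ (x * y) = σ x * σ y)
    (hσinv : ∀ x : S, σ (σ x) = x)
    (μ : S → ℂ) (hμmul : ∀ x y : S, μ (x * y) = μ x * μ y)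
    (hμ1 : ∀ x : S, μ (x * σ x) = 1)
    (θ : S → ℂ) (hθ : ∀ x y : S, θ (x * y) - μ y * θ (σ y * x) = 0)
    (χ : S → ℂ) (hχmul : ∀ x y : S, χ (x * y) = χ x * χ y)
    (hχne : χ ≠ (fun x => μ x * χ (σ x)))
    (α β : ℂ) (hαβ : (α, β) ≠ (0, 0))
    (f g h : S → ℂ)
    (hf : ∀ x : S, f x = θ x + α * (χ x + μ x * χ (σ x)) / 2 + β * (χ x - μ x * χ (σ x)) / 2)
    (hg : ∀ x : S, g x = β * (χ x + μ x * χ (σ x)) + α * (χ x - μ x * χ (σ x)))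
    (hh : ∀ x : S, h x = (χ x - μ x * χ (σ x)) / 2) :
    ∀ x y : S, f (x * y) - μ y * f (σ y * x) = g x * h y := by
  intro x y
  have h1 : μ y * μ (σ y) = 1 := by rw [← hμmul]; exact hμ1 y
  simp only [hf, hg, hh, hχmul, hμmul, hσmul, hσinv]
  linear_combination hθ x y + ((β - α) / 2 * μ x * χ (σ x) * χ y) * h1
end

section
/- Let θ ∈ N_μ(σ,S), let χ : S → ℂ be a nonzero multiplicative function with χ* = χ (where χ*(x) := μ(x)χ(σ(x))), let A : S \ I_χ → ℂ be a nonzero additive function with A(σ(x)) = −A(x) for all x ∈ S \ I_χ, and let α, β ∈ ℂ with (α, β) ≠ (0, 0). Define f, g, h : S → ℂ by: f(x) = θ(x) + (α/2)χ(x)A(x) + (β/4)χ(x)A(x)², g(x) = αχ(x) + βχ(x)A(x), h(x) = χ(x)A(x) for x ∈ S \ I_χ, and f = θ, g = 0, h = 0 on I_χ. Then (f, g, h) satisfies equation (E1): f(xy) − μ(y)f(σ(y)x) = g(x)h(y) for all x, y ∈ S. -/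
/-- Converse, case (4) of Theorem 3.4: with `θ ∈ N_μ(σ,S)`, `χ ≠ 0` multiplicative with
`χ* = χ`, `A` a nonzero additive function on `S \ I_χ` with `A∘σ = −A`, and
`(α, β) ≠ (0, 0)`, the triple given by `f = θ + (α/2)χA + (β/4)χA²`, `g = αχ + βχA`,
`h = χA` on `S \ I_χ` and `f = θ`, `g = 0`, `h = 0` on `I_χ` satisfies
`f(xy) − μ(y)f(σ(y)x) = g(x)h(y)`. -/
theorem stmt_14 {S : Type*} [Semigroup S]
    (σ : S → S) (hσmul : ∀ x y : S, σ (x * y) = σ x * σ y)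
    (hσinv : ∀ x : S, σ (σ x) = x)
    (μ : S → ℂ) (hμmul : ∀ x y : S, μ (x * y) = μ x * μ y)
    (hμ1 : ∀ x : S, μ (x * σ x) = 1)
    (θ : S → ℂ) (hθ : ∀ x y : S, θ (x * y) - μ y * θ (σ y * x) = 0)
    (χ : S → ℂ) (hχmul : ∀ x y : S, χ (x * y) = χ x * χ y) (hχ0 : χ ≠ 0)
    (hχeven : ∀ x : S, μ x * χ (σ x) = χ x)
    (A : S → ℂ)
    (hAadd : ∀ x y : S, χ x ≠ 0 → χ y ≠ 0 → A (x * y) = A x + A y)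
    (hA0 : ∃ x : S, χ x ≠ 0 ∧ A x ≠ 0)
    (hAodd : ∀ x : S, χ x ≠ 0 → A (σ x) = -A x)
    (α β : ℂ) (hαβ : (α, β) ≠ (0, 0))
    (f g h : S → ℂ)
    (hfgh₁ : ∀ x : S, χ x ≠ 0 →
      f x = θ x + α / 2 * (χ x * A x) + β / 4 * (χ x * A x ^ 2) ∧
      g x = α * χ x + β * (χ x * A x) ∧ h x = χ x * A x)
    (hfgh₂ : ∀ x : S, χ x = 0 → f x = θ x ∧ g x = 0 ∧ h x = 0) :
    ∀ x y : S, f (x * y) - μ y * f (σ y * x) = g x * h y := by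
  intro x y
  by_cases hx : χ x = 0
  · have hxy : χ (x * y) = 0 := by rw [hχmul, hx, zero_mul]
    have hsyx : χ (σ y * x) = 0 := by rw [hχmul, hx, mul_zero]
    rw [(hfgh₂ _ hxy).1, (hfgh₂ _ hsyx).1, (hfgh₂ _ hx).2.1, zero_mul]
    exact hθ x y
  · by_cases hy : χ y = 0
    · have hσy : χ (σ y) = 0 := by
        have := hχeven (σ y)
        rw [hσinv, hy, mul_zero] at this
        exact this.symm
      have hxy : χ (x * y) = 0 := by rw [hχmul, hy, mul_zero]
      have hsyx : χ (σ y * x) = 0 := by rw [hχmul, hσy, zero_mul]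
      rw [(hfgh₂ _ hxy).1, (hfgh₂ _ hsyx).1, (hfgh₂ _ hy).2.2, mul_zero]
      exact hθ x y
    · have hμχ : μ y * χ (σ y) = χ y := hχeven y
      have hσy : χ (σ y) ≠ 0 := by
        intro hc
        apply hy
        rw [← hμχ, hc, mul_zero]
      have hxy : χ (x * y) ≠ 0 := by rw [hχmul]; exact mul_ne_zero hx hy
      have hsyx : χ (σ y * x) ≠ 0 := by rw [hχmul]; exact mul_ne_zero hσy hx
      obtain ⟨hf1, -, -⟩ := hfgh₁ _ hxy
      obtain ⟨hf2, -, -⟩ := hfgh₁ _ hsyx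
      obtain ⟨-, hg, -⟩ := hfgh₁ x hx
      obtain ⟨-, -, hh⟩ := hfgh₁ y hy
      rw [hf1, hf2, hg, hh, hχmul x y, hχmul (σ y) x,
        hAadd x y hx hy, hAadd (σ y) x hσy hx, hAodd y hy]
      linear_combination hθ x y +
        (-(α / 2 * (χ x * (A x - A y))) - β / 4 * (χ x * (A x - A y) ^ 2)) * hμχ
end

section
/- Let k, l : S → ℂ be a solution of the μ-sine subtraction law (E2) such that k and l are linearly independent over ℂ. Then there exist constants α, β ∈ ℂ such that l*(z) = l(z) + αk(z) and k*(z) = −βk(z) for all z ∈ S, where β² = 1 and f*(x) := μ(x)f(σ(x)). -/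
/-- If `(k, l)` solves the μ-sine subtraction law and `k, l` are linearly independent over ℂ,
then there are constants `α, β ∈ ℂ` with `β² = 1` such that `l* = l + αk` and `k* = −βk`. -/
theorem stmt_17 {S : Type*} [Semigroup S]
    (σ : S → S) (hσmul : ∀ x y : S, σ (x * y) = σ x * σ y)
    (hσinv : ∀ x : S, σ (σ x) = x)
    (μ : S → ℂ) (hμmul : ∀ x y : S, μ (x * y) = μ x * μ y)
    (hμ1 : ∀ x : S, μ (x * σ x) = 1)
    (k l : S → ℂ) (hind : LinearIndependent ℂ ![k, l])
    (hE2 : ∀ x y : S, μ y * k (x * σ y) = k x * l y - k y * l x) :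
    ∃ α β : ℂ, β ^ 2 = 1 ∧
      (∀ z : S, μ z * l (σ z) = l z + α * k z) ∧
      (∀ z : S, μ z * k (σ z) = -β * k z) := by
  have key : ∀ a b : ℂ, (∀ x, a * k x + b * l x = 0) → a = 0 ∧ b = 0 := by
    intro a b h
    refine LinearIndependent.pair_iff.mp hind a b ?_
    funext x
    simpa [smul_eq_mul] using h x
  have hμσ : ∀ y : S, μ y * μ (σ y) = 1 := fun y => by rw [← hμmul, hμ1]
  -- sine-addition type formula: k(xy) = k(x)l*(y) - k*(y)l(x)
  have B1 : ∀ x y : S, k (x * y) = k x * (μ y * l (σ y)) - (μ y * k (σ y)) * l x := by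
    intro x y
    have h := hE2 x (σ y)
    rw [hσinv] at h
    have h2 := hμσ y
    linear_combination μ y * h - k (x * y) * h2
  -- double expansion of μ(z*y) k (x σ(z*y))
  have Hdouble : ∀ x y z : S, k y * (μ z * l (x * σ z)) =
      k x * (l z * l y - l (z * y)) + l x * (k (z * y) - k z * l y) := by
    intro x y z
    have h1 := hE2 x (z * y)
    rw [hσmul, hμmul, ← mul_assoc] at h1
    have h2 := hE2 (x * σ z) y
    have h3 := hE2 x z
    linear_combination μ z * h2 - h1 + l y * h3
  have hy1' : ∃ y1 : S, k y1 ≠ 0 := by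
    by_contra h
    push_neg at h
    have := (key 1 0 (fun x => by simp [h x])).1
    exact one_ne_zero this
  obtain ⟨y1, hy1⟩ := hy1'
  have hQ' : ∀ y z : S, k y * (k (z * y1) - k z * l y1) = k y1 * (k (z * y) - k z * l y) := by
    intro y z
    have h := key (k y * (l z * l y1 - l (z * y1)) - k y1 * (l z * l y - l (z * y)))
      (k y * (k (z * y1) - k z * l y1) - k y1 * (k (z * y) - k z * l y))
      (fun x => by linear_combination k y1 * Hdouble x y z - k y * Hdouble x y1 z)
    linear_combination h.2
  have hI : ∀ y z : S, l z * ((μ y * k (σ y)) * k y1 - k y * (μ y1 * k (σ y1))) =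
      k z * (k y1 * (μ y * l (σ y) - l y) - k y * (μ y1 * l (σ y1) - l y1)) := by
    intro y z
    linear_combination hQ' y z - k y * B1 z y1 + k y1 * B1 z y
  have hAB : ∀ y : S, (μ y * k (σ y)) * k y1 - k y * (μ y1 * k (σ y1)) = 0 ∧
      k y1 * (μ y * l (σ y) - l y) - k y * (μ y1 * l (σ y1) - l y1) = 0 := by
    intro y
    have h := key (k y1 * (μ y * l (σ y) - l y) - k y * (μ y1 * l (σ y1) - l y1))
      (-((μ y * k (σ y)) * k y1 - k y * (μ y1 * k (σ y1))))
      (fun z => by linear_combination -hI y z)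
    exact ⟨by linear_combination -h.2, h.1⟩
  have hKc : ∀ y, μ y * k (σ y) = (μ y1 * k (σ y1)) / k y1 * k y := by
    intro y
    rw [div_mul_eq_mul_div, eq_div_iff hy1]
    linear_combination (hAB y).1
  have hLα : ∀ y, μ y * l (σ y) = l y + (μ y1 * l (σ y1) - l y1) / k y1 * k y := by
    intro y
    have h := (hAB y).2
    field_simp
    linear_combination h
  have hc2 : ((μ y1 * k (σ y1)) / k y1) ^ 2 = 1 := by
    have h := hKc (σ y1)
    rw [hσinv] at h
    have h2 := hKc y1
    have h3 := hμσ y1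
    have h4 : k y1 * (((μ y1 * k (σ y1)) / k y1) ^ 2 - 1) = 0 := by
      linear_combination -μ y1 * h - ((μ y1 * k (σ y1)) / k y1) * h2 + k y1 * h3
    rcases mul_eq_zero.mp h4 with h5 | h5
    · exact absurd h5 hy1
    · linear_combination h5
  refine ⟨(μ y1 * l (σ y1) - l y1) / k y1, -((μ y1 * k (σ y1)) / k y1),
    by linear_combination hc2, hLα, fun z => ?_⟩
  rw [neg_neg]
  exact hKc z
end
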